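/- Let C be a permutation-invariant partition of the player set of a finite normal-form game with identical interests. If q^c : [0,∞) → Δ^n is a solution of the joint CT-ECFP differential inclusion q̇ ∈ BR(q̄) − q, then the associated centroid process q̄^c (the centroid distribution of q^c(t) at each time t) is a solution of the centroid differential inclusion ẏ ∈ BR(y) − y. -/

import Mathlib

/-!
The centroid map `p ↦ p̄` is linear, so it carries the integral representation
`q(t) = q(0) + ∫ g` of a joint solution to `q̄(t) = q̄(0) + ∫ ḡ`; it remains to see that
`ḡ = b̄ - q̄` lies in `BR(q̄) - q̄` whenever `b ∈ BR(q̄)`. Against the class-constant profile `q̄`,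
two players of the same class have the same best-response set, since swapping them leaves the
utility unchanged; and best-response sets are convex, since `U` is affine in each player's own
strategy. Hence the class average `b̄` of best responses is again a best response.
-/

open MeasureTheory Filter Topology

noncomputable section

namespace ECFP

variable {ι A κ : Type*}

/-- The mixed-strategy simplex over a finite action set `Y` inside the action universe `A`. -/
def simplex (Y : Finset A) : Set (A → ℝ) :=
  {p | (∀ a, 0 ≤ p a) ∧ (∀ a, a ∉ Y → p a = 0) ∧ ∑ a ∈ Y, p a = 1}

/-- The space `Δⁿ` of joint mixed strategies. -/
def Delta (Y : ι → Finset A) : Set (ι → A → ℝ) :=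
  {p | ∀ i, p i ∈ simplex (Y i)}

variable [Fintype ι] [DecidableEq ι] [Fintype A] [DecidableEq κ]

/-- The mixed extension of the common utility `u`:
`U(p₁,…,pₙ) = ∑_y u(y) p₁(y₁)⋯pₙ(yₙ)`. -/
def U (u : (ι → A) → ℝ) (p : ι → A → ℝ) : ℝ :=
  ∑ y : ι → A, u y * ∏ i, p i (y i)

/-- The `ε`-best-response set of player `i` against the joint strategy `p`
(only the components `p_{-i}` matter, since player `i`'s component is overwritten):
`{pᵢ ∈ Δᵢ : U(pᵢ,p_{-i}) ≥ U(qᵢ,p_{-i}) - ε  ∀ qᵢ ∈ Δᵢ}`. -/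
def BRi (Y : ι → Finset A) (u : (ι → A) → ℝ) (ε : ℝ) (p : ι → A → ℝ) (i : ι) :
    Set (A → ℝ) :=
  {pi | pi ∈ simplex (Y i) ∧
    ∀ qi ∈ simplex (Y i),
      U u (Function.update p i pi) ≥ U u (Function.update p i qi) - ε}

/-- The joint `ε`-best-response set `BR^ε(p) = (BR₁^ε(p_{-1}),…,BRₙ^ε(p_{-n}))`. -/
def BR (Y : ι → Finset A) (u : (ι → A) → ℝ) (ε : ℝ) (p : ι → A → ℝ) :
    Set (ι → A → ℝ) :=
  {b | ∀ i, b i ∈ BRi Y u ε p i}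

/-- The profile obtained from `y` by swapping the strategies of players `i` and `j`. -/
def swapStrat (y : ι → A) (i j : ι) : ι → A :=
  Function.update (Function.update y i (y j)) j (y i)

/-- `cls : ι → κ` encodes a permutation-invariant partition of the player set (the classes
are the fibers of `cls`): players in the same class have the same action set, and the utility
is invariant under swapping the strategies of two same-class players in any strategy profile. -/
def PermInvariant (Y : ι → Finset A) (u : (ι → A) → ℝ) (cls : ι → κ) : Prop :=
  ∀ i j : ι, cls i = cls j →
    Y i = Y j ∧ ∀ y : ι → A, (∀ k, y k ∈ Y k) → u (swapStrat y i j) = u y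

/-- The equivalence class (as a finset of players) of player `i`. -/
def cluster (cls : ι → κ) (i : ι) : Finset ι :=
  Finset.univ.filter (fun j => cls j = cls i)

/-- The centroid distribution `p̄`: player `i` is assigned the average of the strategies of
the players in `i`'s class. -/
def centroid (cls : ι → κ) (p : ι → A → ℝ) : ι → A → ℝ :=
  fun i => ((cluster cls i).card : ℝ)⁻¹ • ∑ j ∈ cluster cls i, p j

/-- A joint strategy is class-constant if same-class players use identical strategies. -/
def classConst (cls : ι → κ) (p : ι → A → ℝ) : Prop :=
  ∀ i j, cls i = cls j → p i = p j

/-- The set of Nash equilibria. -/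
def NE (Y : ι → Finset A) (u : (ι → A) → ℝ) : Set (ι → A → ℝ) :=
  {p | p ∈ Delta Y ∧ ∀ i, ∀ qi ∈ simplex (Y i),
    U u (Function.update p i qi) ≤ U u p}

/-- The set of symmetric Nash equilibria relative to the partition `cls`. -/
def SNE (Y : ι → Finset A) (u : (ι → A) → ℝ) (cls : ι → κ) : Set (ι → A → ℝ) :=
  {p | p ∈ NE Y u ∧ classConst cls p}

/-- The set of mean-centric equilibria relative to the partition `cls`:
`U(pᵢ, p̄_{-i}) ≥ U(pᵢ', p̄_{-i})` for all `pᵢ' ∈ Δᵢ` and all `i`. -/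
def MCE (Y : ι → Finset A) (u : (ι → A) → ℝ) (cls : ι → κ) : Set (ι → A → ℝ) :=
  {p | p ∈ Delta Y ∧ ∀ i, ∀ qi ∈ simplex (Y i),
    U u (Function.update (centroid cls p) i qi)
      ≤ U u (Function.update (centroid cls p) i (p i))}

/-- `V(p) = (1/n) ∑ᵢ U(pᵢ, p̄_{-i})`. -/
def Vfun (u : (ι → A) → ℝ) (cls : ι → κ) (p : ι → A → ℝ) : ℝ :=
  (Fintype.card ι : ℝ)⁻¹ * ∑ i, U u (Function.update (centroid cls p) i (p i))

/-- A discrete-time ECFP process w.r.t. `(Γ, 𝒞)`: `q(1) = a(1)`,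
`q(t+1) = q(t) + γₜ (a(t+1) − q(t))` and `a(t+1) ∈ BR^{εₜ}(q̄(t))` for all `t`
(time is indexed by `ℕ`, i.e. `t = 0` plays the role of `t = 1` in the paper). -/
structure IsECFP (Y : ι → Finset A) (u : (ι → A) → ℝ) (cls : ι → κ)
    (γ ε : ℕ → ℝ) (a q : ℕ → ι → A → ℝ) : Prop where
  a_init_mem : a 0 ∈ Delta Y
  q_mem : ∀ t, q t ∈ Delta Y
  init : q 0 = a 0
  step : ∀ t, q (t + 1) = q t + γ t • (a (t + 1) - q t)
  br : ∀ t, a (t + 1) ∈ BR Y u (ε t) (centroid cls (q t))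

/-- A solution of the differential inclusion `ẋ ∈ F(x)` taking values in `Δⁿ`:
an everywhere-`Δⁿ`-valued trajectory on `[0,∞)` which is the integral of a locally
integrable selection `g(t) ∈ F(x(t))` (a.e.). -/
def IsSolution (Y : ι → Finset A) (F : (ι → A → ℝ) → Set (ι → A → ℝ))
    (x : ℝ → ι → A → ℝ) : Prop :=
  (∀ t : ℝ, 0 ≤ t → x t ∈ Delta Y) ∧
  ∃ g : ℝ → ι → A → ℝ,
    LocallyIntegrableOn g (Set.Ici (0 : ℝ)) ∧
    (∀ᵐ t ∂(volume.restrict (Set.Ici (0 : ℝ))), g t ∈ F (x t)) ∧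
    ∀ t : ℝ, 0 ≤ t → x t = x 0 + ∫ s in Set.Ioc (0 : ℝ) t, g s

/-- Right-hand side of the joint CT-ECFP differential inclusion `q̇ ∈ BR(q̄) − q`. -/
def Fjoint (Y : ι → Finset A) (u : (ι → A) → ℝ) (cls : ι → κ)
    (q : ι → A → ℝ) : Set (ι → A → ℝ) :=
  (fun b => b - q) '' BR Y u 0 (centroid cls q)

/-- Right-hand side of the centroid CT-ECFP differential inclusion `ẏ ∈ BR(y) − y`. -/
def Fcent (Y : ι → Finset A) (u : (ι → A) → ℝ)
    (y : ι → A → ℝ) : Set (ι → A → ℝ) :=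
  (fun b => b - y) '' BR Y u 0 y

/-- The ω-limit set of a continuous-time trajectory: all limits of sequences
`x(t_k)` with `t_k → ∞`. -/
def omegaLimitSet (x : ℝ → ι → A → ℝ) : Set (ι → A → ℝ) :=
  {p | ∃ tk : ℕ → ℝ, Tendsto tk atTop atTop ∧ Tendsto (fun k => x (tk k)) atTop (𝓝 p)}

/-- The set of limit points of a (discrete-time) sequence. -/
def seqLimitPoints (q : ℕ → ι → A → ℝ) : Set (ι → A → ℝ) :=
  {p | ∃ φ : ℕ → ℕ, StrictMono φ ∧ Tendsto (fun k => q (φ k)) atTop (𝓝 p)}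

/-- A compact set `X ⊆ Δⁿ` is internally chain transitive for the inclusion `ẋ ∈ F(x)`:
any two points of `X` can be joined, for every `ε > 0` and `T > 0`, by finitely many
solution pieces of duration `> T` staying in `X`, with jumps of size `≤ ε`. -/
def InternallyChainTransitive (Y : ι → Finset A)
    (F : (ι → A → ℝ) → Set (ι → A → ℝ)) (X : Set (ι → A → ℝ)) : Prop :=
  IsCompact X ∧ X ⊆ Delta Y ∧
  ∀ ξ ∈ X, ∀ η ∈ X, ∀ ε : ℝ, 0 < ε → ∀ T : ℝ, 0 < T →
    ∃ k : ℕ, 0 < k ∧ ∃ x : ℕ → ℝ → ι → A → ℝ, ∃ tt : ℕ → ℝ,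
      (∀ i < k, IsSolution Y F (x i)) ∧
      (∀ i < k, T < tt i) ∧
      (∀ i < k, ∀ s : ℝ, 0 ≤ s → s ≤ tt i → x i s ∈ X) ∧
      (∀ i, i + 1 < k → ‖x i (tt i) - x (i + 1) 0‖ ≤ ε) ∧
      ‖x 0 0 - ξ‖ ≤ ε ∧ ‖x (k - 1) (tt (k - 1)) - η‖ ≤ ε

omit [Fintype A] in
lemma convex_simplex (Y : Finset A) : Convex ℝ (simplex Y) := by
  rintro p ⟨hp₀, hpY, hp₁⟩ q ⟨hq₀, hqY, hq₁⟩ a b ha hb hab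
  refine ⟨fun c => ?_, fun c hc => ?_, ?_⟩
  · simp only [Pi.add_apply, Pi.smul_apply, smul_eq_mul]
    exact add_nonneg (mul_nonneg ha (hp₀ c)) (mul_nonneg hb (hq₀ c))
  · simp [hpY c hc, hqY c hc]
  · simp only [Pi.add_apply, Pi.smul_apply, smul_eq_mul, Finset.sum_add_distrib,
      ← Finset.mul_sum, hp₁, hq₁, mul_one, hab]

lemma U_update_eq_sum (u : (ι → A) → ℝ) (p : ι → A → ℝ) (i : ι) (r : A → ℝ) :
    U u (Function.update p i r) =
      ∑ y : ι → A, r (y i) * (u y * ∏ l ∈ Finset.univ.erase i, p l (y l)) := by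
  refine Finset.sum_congr rfl fun y _ => ?_
  rw [← Finset.mul_prod_erase _ _ (Finset.mem_univ i), Function.update_self,
    Finset.prod_congr rfl fun l hl => by rw [Function.update_of_ne (Finset.ne_of_mem_erase hl)]]
  ring

lemma U_update_add_smul (u : (ι → A) → ℝ) (p : ι → A → ℝ) (i : ι) (a b : ℝ)
    (r s : A → ℝ) :
    U u (Function.update p i (a • r + b • s)) =
      a * U u (Function.update p i r) + b * U u (Function.update p i s) := by
  simp only [U_update_eq_sum, Finset.mul_sum, ← Finset.sum_add_distrib]
  refine Finset.sum_congr rfl fun y _ => ?_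
  simp only [Pi.add_apply, Pi.smul_apply, smul_eq_mul]
  ring

lemma convex_BRi (Y : ι → Finset A) (u : (ι → A) → ℝ) (ε : ℝ) (p : ι → A → ℝ) (i : ι) :
    Convex ℝ (BRi Y u ε p i) := by
  rintro r ⟨hr, hrbest⟩ s ⟨hs, hsbest⟩ a b ha hb hab
  refine ⟨convex_simplex _ hr hs ha hb hab, fun q hq => ?_⟩
  obtain rfl : b = 1 - a := by linarith
  have hr' := mul_le_mul_of_nonneg_left (hrbest q hq) ha
  have hs' := mul_le_mul_of_nonneg_left (hsbest q hq) hb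
  rw [U_update_add_smul]
  linarith

omit [DecidableEq κ] in
/-- After substituting `y ↦ y ∘ swap i j`, only profiles inside `∏ Y` carry weight, and on
those `u` is invariant under the swap. -/
lemma U_comp_swap {Y : ι → Finset A} {u : (ι → A) → ℝ} {cls : ι → κ}
    (hpi : PermInvariant Y u cls) {i j : ι} (hij : cls i = cls j) {q : ι → A → ℝ}
    (hq : ∀ l a, a ∉ Y l → q l a = 0) :
    U u (q ∘ Equiv.swap i j) = U u q := by
  set σ := Equiv.swap i j
  let e : (ι → A) ≃ (ι → A) := σ.arrowCongr (Equiv.refl A)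
  have he : ∀ y, e y = y ∘ σ := fun y => by
    funext l; simp [e, σ, Equiv.arrowCongr_apply, Equiv.symm_swap]
  refine (Fintype.sum_equiv e _ _ fun y => ?_).symm
  have hprod : ∏ l, (q ∘ σ) l (e y l) = ∏ l, q l (y l) := by
    simpa [he] using Equiv.prod_comp σ fun l => q l (y l)
  rw [hprod]
  by_cases hy : ∀ l, y l ∈ Y l
  · have hswap : e y = swapStrat y i j := by
      funext l
      rw [he]
      rcases eq_or_ne l j with rfl | hlj
      · simp [σ, swapStrat]
      rcases eq_or_ne l i with rfl | hli
      · simp [σ, swapStrat, Function.update_of_ne hlj]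
      · simp [σ, swapStrat, Function.update_of_ne hlj, Function.update_of_ne hli,
          Equiv.swap_apply_of_ne_of_ne hli hlj]
    rw [hswap, (hpi i j hij).2 y hy]
  · obtain ⟨l, hl⟩ := not_forall.1 hy
    rw [Finset.prod_eq_zero (Finset.mem_univ l) (hq l _ hl), mul_zero, mul_zero]

omit [DecidableEq κ] in
lemma U_update_eq_of_classConst {Y : ι → Finset A} {u : (ι → A) → ℝ} {cls : ι → κ}
    (hpi : PermInvariant Y u cls) {p : ι → A → ℝ} (hp : p ∈ Delta Y)
    (hcc : classConst cls p) {i j : ι} (hij : cls i = cls j) {r : A → ℝ}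
    (hr : r ∈ simplex (Y i)) :
    U u (Function.update p j r) = U u (Function.update p i r) := by
  have hswap : Function.update p i r ∘ Equiv.swap i j = Function.update p j r := by
    funext l
    rcases eq_or_ne l j with rfl | hlj
    · simp
    rcases eq_or_ne l i with rfl | hli
    · simp [Function.update_of_ne hlj, Function.update_of_ne hlj.symm, hcc l j hij]
    · simp [Function.update_of_ne hlj, Function.update_of_ne hli,
        Equiv.swap_apply_of_ne_of_ne hli hlj]
  rw [← hswap]
  refine U_comp_swap hpi hij fun l a ha => ?_
  rcases eq_or_ne l i with rfl | hli
  · simpa using hr.2.1 a ha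
  · simpa [Function.update_of_ne hli] using (hp l).2.1 a ha

omit [DecidableEq κ] in
lemma BRi_eq_of_classConst {Y : ι → Finset A} {u : (ι → A) → ℝ} {cls : ι → κ}
    (hpi : PermInvariant Y u cls) (ε : ℝ) {p : ι → A → ℝ} (hp : p ∈ Delta Y)
    (hcc : classConst cls p) {i j : ι} (hij : cls i = cls j) :
    BRi Y u ε p j = BRi Y u ε p i := by
  ext r
  simp only [BRi, ← (hpi i j hij).1]
  refine and_congr_right fun hr => forall₂_congr fun q hq => ?_
  rw [U_update_eq_of_classConst hpi hp hcc hij hr, U_update_eq_of_classConst hpi hp hcc hij hq]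

omit [DecidableEq ι] in
@[simp] lemma mem_cluster {cls : ι → κ} {i j : ι} : j ∈ cluster cls i ↔ cls j = cls i := by
  simp [cluster]

omit [DecidableEq ι] [Fintype A] in
lemma centroid_apply_mem {s : Set (A → ℝ)} (hs : Convex ℝ s) (cls : ι → κ)
    {p : ι → A → ℝ} {i : ι} (hp : ∀ j ∈ cluster cls i, p j ∈ s) :
    centroid cls p i ∈ s := by
  have hcard : (0 : ℝ) < (cluster cls i).card :=
    Nat.cast_pos.2 (Finset.card_pos.2 ⟨i, mem_cluster.2 rfl⟩)
  rw [centroid, Finset.smul_sum]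
  refine hs.sum_mem (fun _ _ => by positivity) ?_ hp
  rw [Finset.sum_const, nsmul_eq_mul, mul_inv_cancel₀ hcard.ne']

omit [DecidableEq ι] [Fintype A] in
lemma centroid_mem_Delta {Y : ι → Finset A} {cls : ι → κ}
    (hY : ∀ i j, cls i = cls j → Y i = Y j) {p : ι → A → ℝ} (hp : p ∈ Delta Y) :
    centroid cls p ∈ Delta Y := fun i =>
  centroid_apply_mem (convex_simplex _) cls fun j hj => by
    simpa [hY j i (mem_cluster.1 hj)] using hp j

omit [DecidableEq ι] [Fintype A] in
lemma centroid_classConst (cls : ι → κ) (p : ι → A → ℝ) :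
    classConst cls (centroid cls p) := by
  intro i j hij
  simp only [centroid, cluster, hij]

lemma centroid_mem_BR {Y : ι → Finset A} {u : (ι → A) → ℝ} {cls : ι → κ}
    (hpi : PermInvariant Y u cls) {ε : ℝ} {p : ι → A → ℝ} (hp : p ∈ Delta Y)
    (hcc : classConst cls p) {b : ι → A → ℝ} (hb : b ∈ BR Y u ε p) :
    centroid cls b ∈ BR Y u ε p := fun i =>
  centroid_apply_mem (convex_BRi Y u ε p i) cls fun j hj => by
    rw [← BRi_eq_of_classConst hpi ε hp hcc (mem_cluster.1 hj).symm]
    exact hb j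

def centroidCLM (cls : ι → κ) : (ι → A → ℝ) →L[ℝ] (ι → A → ℝ) :=
  LinearMap.toContinuousLinearMap
    { toFun := centroid cls
      map_add' p q := by
        funext i
        simp [centroid, Finset.sum_add_distrib]
      map_smul' c p := by
        funext i
        simp only [centroid, RingHom.id_apply, Pi.smul_apply, ← Finset.smul_sum]
        rw [smul_comm] }

lemma centroid_mem_Fcent {Y : ι → Finset A} {u : (ι → A) → ℝ} {cls : ι → κ}
    (hpi : PermInvariant Y u cls) {q : ι → A → ℝ} (hq : q ∈ Delta Y) {v : ι → A → ℝ}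
    (hv : v ∈ Fjoint Y u cls q) :
    centroid cls v ∈ Fcent Y u (centroid cls q) := by
  obtain ⟨b, hb, rfl⟩ := hv
  refine ⟨centroid cls b, centroid_mem_BR hpi ?_ (centroid_classConst cls q) hb, ?_⟩
  · exact centroid_mem_Delta (fun i j hij => (hpi i j hij).1) hq
  · exact ((centroidCLM cls).map_sub b q).symm

omit [DecidableEq ι] in
lemma IsSolution.map {Y : ι → Finset A} {F G : (ι → A → ℝ) → Set (ι → A → ℝ)}
    (L : (ι → A → ℝ) →L[ℝ] (ι → A → ℝ)) (hL : ∀ p ∈ Delta Y, L p ∈ Delta Y)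
    (hFG : ∀ p ∈ Delta Y, ∀ v ∈ F p, L v ∈ G (L p)) {x : ℝ → ι → A → ℝ}
    (hx : IsSolution Y F x) :
    IsSolution Y G (fun t => L (x t)) := by
  obtain ⟨hxΔ, g, hg, hgF, hxg⟩ := hx
  refine ⟨fun t ht => hL _ (hxΔ t ht), fun t => L (g t), L.locallyIntegrableOn_comp hg, ?_,
    fun t ht => ?_⟩
  · filter_upwards [hgF, ae_restrict_mem measurableSet_Ici] with t hgt ht
    exact hFG _ (hxΔ t ht) _ hgt
  · have hint : IntegrableOn g (Set.Ioc 0 t) :=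
      (hg.integrableOn_compact_subset Set.Icc_subset_Ici_self isCompact_Icc).mono_set
        Set.Ioc_subset_Icc_self
    show L (x t) = L (x 0) + ∫ s in Set.Ioc 0 t, L (g s)
    rw [hxg t ht, map_add, L.integral_comp_comm hint]

variable [Nonempty ι]

theorem centroid_of_solution_isSolution_general
    (Y : ι → Finset A) (u : (ι → A) → ℝ)
    (cls : ι → κ) (hpi : PermInvariant Y u cls)
    (x : ℝ → ι → A → ℝ) (hx : IsSolution Y (Fjoint Y u cls) x) :
    IsSolution Y (Fcent Y u) (fun t => centroid cls (x t)) :=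
  hx.map (centroidCLM cls) (fun _ => centroid_mem_Delta fun i j hij => (hpi i j hij).1)
    fun _ hq _ => centroid_mem_Fcent hpi hq

/-- If `q^c` solves the joint CT-ECFP inclusion `q̇ ∈ BR(q̄) − q`, then its centroid process
solves the centroid inclusion `ẏ ∈ BR(y) − y`. -/
theorem centroid_of_solution_isSolution
    (Y : ι → Finset A) (hY : ∀ i, (Y i).Nonempty) (u : (ι → A) → ℝ)
    (cls : ι → κ) (hpi : PermInvariant Y u cls)
    (x : ℝ → ι → A → ℝ) (hx : IsSolution Y (Fjoint Y u cls) x) :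
    IsSolution Y (Fcent Y u) (fun t => centroid cls (x t)) :=
  centroid_of_solution_isSolution_general Y u cls hpi x hx

end ECFP
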